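/- arXiv:1102.0230 — 3 statements merged into one kernel-verified Lean document; each statement's English description precedes it below -/
import Mathlib

section
/- For every n, every permutation π of Fin n, and every assignment σ : Fin n → Bool, the permutation predicate PP(π)(σ) — defined as the conjunction over all i of the bit predicates BP(π,i)(σ) = [(∀ j < i, σ j = σ(π j)) → σ i ≤ σ(π i)] — holds if and only if σ ≤ σ ∘ π in the lexicographic order on assignments. -/
/-- Lexicographic order on assignments `Fin n → Bool` (earlier indices more significant,
with `false < true`): `σ ≤ τ` iff `σ = τ` or there is an index `i` with `σ j = τ j`
for all `j < i`, `σ i = false` and `τ i = true`. -/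
def lexLe {n : ℕ} (σ τ : Fin n → Bool) : Prop :=
  σ = τ ∨ ∃ i : Fin n, (∀ j, j < i → σ j = τ j) ∧ σ i = false ∧ τ i = true

/-- Crawford's bit predicate `BP(π, i)(σ)`. -/
def BP {n : ℕ} (π : Equiv.Perm (Fin n)) (i : Fin n) (σ : Fin n → Bool) : Prop :=
  (∀ j, j < i → σ j = σ (π j)) → σ i ≤ σ (π i)

/-- Crawford's permutation predicate `PP(π)(σ)`, the conjunction of all bit predicates. -/
def PP {n : ℕ} (π : Equiv.Perm (Fin n)) (σ : Fin n → Bool) : Prop :=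
  ∀ i : Fin n, BP π i σ

/-! `PP π σ` unfolds to the statement that `σ i ≤ σ (π i)` at every index `i` before which
`σ` and `σ ∘ π` agree. For a linear order of coordinates this is exactly `σ ≤ σ ∘ π`
lexicographically: at the first index where the two differ it forces `σ < σ ∘ π`, and at
every other index it holds trivially (equal values before it, a vacuous premise after it). -/

theorem Pi.toLex_le_toLex_iff {ι : Type*} {β : ι → Type*} [LinearOrder ι] [WellFoundedLT ι]
    [∀ i, LinearOrder (β i)] {x y : ∀ i, β i} :
    toLex x ≤ toLex y ↔ ∀ i, (∀ j < i, x j = y j) → x i ≤ y i := by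
  refine ⟨fun hxy _ => apply_le_of_toLex hxy, fun h => ?_⟩
  by_contra! hyx
  obtain ⟨i, hagree, hlt⟩ := hyx
  exact (h i fun j hj => (hagree j hj).symm).not_gt hlt

theorem lexLe_iff_toLex_le {n : ℕ} {σ τ : Fin n → Bool} : lexLe σ τ ↔ toLex σ ≤ toLex τ := by
  simp only [lexLe, le_iff_eq_or_lt, toLex_inj]
  exact or_congr_right <| exists_congr fun i => and_congr_right' Bool.lt_iff.symm

/-- The permutation predicate `PP(π)` holds at `σ` iff `σ ≤ σ ∘ π` in lexicographic order. -/
theorem stmt_3 {n : ℕ} (π : Equiv.Perm (Fin n)) (σ : Fin n → Bool) :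
    PP π σ ↔ lexLe σ (σ ∘ π) := by
  rw [lexLe_iff_toLex_le, Pi.toLex_le_toLex_iff]
  rfl
end

section
/- Let f : (Fin n → Bool) → Bool be invariant under a permutation π of Fin n, i.e. f(σ ∘ π) = f(σ) for all σ. Then f is satisfiable if and only if there exists an assignment σ with f(σ) = true and σ ≤ σ ∘ π in lexicographic order. In other words, conjoining the lex-leader symmetry breaking predicate for π to f preserves satisfiability. -/
theorem exists_le_apply_of_forall_imp {α : Type*} [LinearOrder α] [WellFoundedLT α]
    {p : α → Prop} (g : α → α) (hg : ∀ x, p x → p (g x)) (h : ∃ x, p x) :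
    ∃ x, p x ∧ x ≤ g x := by
  obtain ⟨x, hx, hmin⟩ := wellFounded_lt.has_min {x | p x} h
  exact ⟨x, hx, not_lt.1 (hmin (g x) (hg x hx))⟩

theorem lexLe_of_toLex_le {n : ℕ} {σ τ : Fin n → Bool} (h : toLex σ ≤ toLex τ) :
    lexLe σ τ := by
  rcases h.eq_or_lt with h | ⟨i, hlt, hi⟩
  · exact Or.inl (toLex.injective h)
  · rw [Bool.lt_iff] at hi
    exact Or.inr ⟨i, hlt, hi⟩

/-- If `f` is invariant under a permutation `π` of `Fin n`, then `f` is satisfiable iff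
some assignment `σ` satisfies `f` together with the lex-leader symmetry breaking
predicate `σ ≤ σ ∘ π`. -/
theorem stmt_4 {n : ℕ} (f : (Fin n → Bool) → Bool) (π : Equiv.Perm (Fin n))
    (hinv : ∀ σ : Fin n → Bool, f (σ ∘ π) = f σ) :
    (∃ σ : Fin n → Bool, f σ = true) ↔
      (∃ σ : Fin n → Bool, f σ = true ∧ lexLe σ (σ ∘ π)) := by
  refine ⟨fun ⟨σ, hσ⟩ => ?_, fun ⟨σ, hσ, _⟩ => ⟨σ, hσ⟩⟩
  obtain ⟨τ, hτ, hle⟩ := exists_le_apply_of_forall_imp (α := Lex (Fin n → Bool))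
    (p := fun τ => f (ofLex τ) = true) (fun τ => toLex (ofLex τ ∘ π))
    (fun τ hτ => (hinv _).trans hτ) ⟨toLex σ, hσ⟩
  exact ⟨ofLex τ, hτ, lexLe_of_toLex_le hle⟩
end

section
/- Let (i₁, j₁), …, (i_m, j_m) be pairs of indices of Fin n with i_k < j_k for each k and with all 2m indices pairwise distinct, and let f : (Fin n → Bool) → Bool be invariant under each individual transposition Equiv.swap i_k j_k. Then f is satisfiable if and only if there is an assignment σ with f(σ) = true and σ i_k ≤ σ j_k for every k. That is, the manually generated symmetry breaking predicate ⋀_k (¬X_{i_k} ∨ X_{j_k}) produced pair-by-pair preserves satisfiability. -/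
/-- Let `(i₁, j₁), …, (i_m, j_m)` be pairs of indices of `Fin n` with `i_k < j_k` and all
`2m` indices pairwise distinct, and let `f` be invariant under each transposition
`Equiv.swap i_k j_k`. Then `f` is satisfiable iff some assignment `σ` satisfies `f`
together with the manually generated symmetry breaking predicate
`⋀_k (¬X_{i_k} ∨ X_{j_k})`, i.e. `σ i_k ≤ σ j_k` for every `k`. -/
theorem stmt_14 {n m : ℕ} (pairs : Fin m → Fin n × Fin n)
    (hlt : ∀ k, (pairs k).1 < (pairs k).2)
    (hdisj : Function.Injective
      (fun x : Fin m × Bool => if x.2 then (pairs x.1).1 else (pairs x.1).2))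
    (f : (Fin n → Bool) → Bool)
    (hinv : ∀ k, ∀ σ : Fin n → Bool, f (σ ∘ Equiv.swap (pairs k).1 (pairs k).2) = f σ) :
    (∃ σ : Fin n → Bool, f σ = true) ↔
      (∃ σ : Fin n → Bool, f σ = true ∧ ∀ k, σ (pairs k).1 ≤ σ (pairs k).2) := by
  have hij : ∀ k l : Fin m, (pairs k).1 ≠ (pairs l).2 := by
    intro k l h
    have := hdisj (a₁ := (k, true)) (a₂ := (l, false)) (by simpa using h)
    simp at this
  have hii : ∀ k l : Fin m, (pairs k).1 = (pairs l).1 → k = l := by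
    intro k l h
    have := hdisj (a₁ := (k, true)) (a₂ := (l, true)) (by simpa using h)
    simpa using (Prod.ext_iff.mp this).1
  have hjj : ∀ k l : Fin m, (pairs k).2 = (pairs l).2 → k = l := by
    intro k l h
    have := hdisj (a₁ := (k, false)) (a₂ := (l, false)) (by simpa using h)
    simpa using (Prod.ext_iff.mp this).1
  constructor
  · rintro ⟨σ₀, hσ₀⟩
    have key : ∀ N : ℕ, ∀ σ : Fin n → Bool, f σ = true →
        (Finset.univ.filter
          (fun k => ¬ σ (pairs k).1 ≤ σ (pairs k).2)).card ≤ N →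
        ∃ τ : Fin n → Bool, f τ = true ∧ ∀ k, τ (pairs k).1 ≤ τ (pairs k).2 := by
      intro N
      induction N with
      | zero =>
        intro σ hσ hcard
        refine ⟨σ, hσ, fun k => ?_⟩
        by_contra h
        have hk : k ∈ Finset.univ.filter
            (fun k => ¬ σ (pairs k).1 ≤ σ (pairs k).2) :=
          Finset.mem_filter.mpr ⟨Finset.mem_univ k, h⟩
        have := Finset.card_pos.mpr ⟨k, hk⟩
        omega
      | succ N ih =>
        intro σ hσ hcard
        by_cases hall : ∀ k, σ (pairs k).1 ≤ σ (pairs k).2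
        · exact ⟨σ, hσ, hall⟩
        · push_neg at hall
          obtain ⟨k, hk⟩ := hall
          set τ := σ ∘ Equiv.swap (pairs k).1 (pairs k).2 with hτdef
          have hτ : f τ = true := by rw [hinv k σ]; exact hσ
          have hfix : ∀ l, l ≠ k →
              τ (pairs l).1 = σ (pairs l).1 ∧ τ (pairs l).2 = σ (pairs l).2 := by
            intro l hl
            constructor
            · show σ (Equiv.swap (pairs k).1 (pairs k).2 (pairs l).1) = _
              rw [Equiv.swap_apply_of_ne_of_ne]
              · exact fun h => hl (hii l k h)
              · exact hij l k
            · show σ (Equiv.swap (pairs k).1 (pairs k).2 (pairs l).2) = _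
              rw [Equiv.swap_apply_of_ne_of_ne]
              · exact fun h => (hij k l h.symm)
              · exact fun h => hl (hjj l k h)
          have hkgood : τ (pairs k).1 ≤ τ (pairs k).2 := by
            have h1 : τ (pairs k).1 = σ (pairs k).2 := by
              show σ (Equiv.swap (pairs k).1 (pairs k).2 (pairs k).1) = _
              rw [Equiv.swap_apply_left]
            have h2 : τ (pairs k).2 = σ (pairs k).1 := by
              show σ (Equiv.swap (pairs k).1 (pairs k).2 (pairs k).2) = _
              rw [Equiv.swap_apply_right]
            rw [h1, h2]
            exact le_of_lt hk
          apply ih τ hτ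
          have hsub : (Finset.univ.filter
              (fun l => ¬ τ (pairs l).1 ≤ τ (pairs l).2)) ⊆
              (Finset.univ.filter
              (fun l => ¬ σ (pairs l).1 ≤ σ (pairs l).2)).erase k := by
            intro l hl
            simp only [Finset.mem_filter, Finset.mem_univ, true_and] at hl
            have hlk : l ≠ k := by
              intro h; subst h; exact hl hkgood
            obtain ⟨h1, h2⟩ := hfix l hlk
            rw [h1, h2] at hl
            exact Finset.mem_erase.mpr ⟨hlk, Finset.mem_filter.mpr ⟨Finset.mem_univ l, hl⟩⟩
          have hkmem : k ∈ Finset.univ.filter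
              (fun l => ¬ σ (pairs l).1 ≤ σ (pairs l).2) :=
            Finset.mem_filter.mpr ⟨Finset.mem_univ k, not_le.mpr hk⟩
          have := Finset.card_le_card hsub
          rw [Finset.card_erase_of_mem hkmem] at this
          have := Finset.card_pos.mpr ⟨k, hkmem⟩
          omega
    exact key _ σ₀ hσ₀ le_rfl
  · rintro ⟨σ, hσ, -⟩
    exact ⟨σ, hσ⟩
end
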